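/- Let G = G₁G₂ = G₂G₁ be a matched pair of subgroupoids with both factorizations, and define φ(g) = p₁(g)⁻¹ p₂'(g). Then φ is an involution: φ(φ(g)) = g for every g ∈ G. -/

import Mathlib

/-- A groupoid presented algebraically: a set of arrows with source `s`, range `r`,
a (total) multiplication which is only meaningful on composable pairs (`s x = r y`),
and inversion. Units are the elements in the range of `s`. -/
structure PreGroupoid (G : Type*) where
  s : G → G
  r : G → G
  mul : G → G → G
  inv : G → G
  s_s : ∀ x, s (s x) = s x
  r_s : ∀ x, r (s x) = s x
  s_r : ∀ x, s (r x) = r x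
  r_r : ∀ x, r (r x) = r x
  r_mul : ∀ x y, s x = r y → r (mul x y) = r x
  s_mul : ∀ x y, s x = r y → s (mul x y) = s y
  mul_assoc' : ∀ x y z, s x = r y → s y = r z → mul (mul x y) z = mul x (mul y z)
  id_left : ∀ x, mul (r x) x = x
  id_right : ∀ x, mul x (s x) = x
  s_inv : ∀ x, s (inv x) = r x
  r_inv : ∀ x, r (inv x) = s x
  inv_mul : ∀ x, mul (inv x) x = s x
  mul_inv : ∀ x, mul x (inv x) = r x

namespace PreGroupoid

variable {G : Type*}

/-- The set of units `G⁰` of the groupoid. -/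
def units (Gp : PreGroupoid G) : Set G := Set.range Gp.s

/-- A subgroupoid: contains all units, closed under composable products and inverses. -/
structure IsSubgroupoid (Gp : PreGroupoid G) (S : Set G) : Prop where
  unit_mem : ∀ x, Gp.s x ∈ S
  mul_mem : ∀ {x y}, x ∈ S → y ∈ S → Gp.s x = Gp.r y → Gp.mul x y ∈ S
  inv_mem : ∀ {x}, x ∈ S → Gp.inv x ∈ S

/-- `p₁, p₂` factor every element of `G` as a composable product `g = p₁(g) p₂(g)`
with `p₁(g) ∈ G₁` and `p₂(g) ∈ G₂`. -/
def IsFactorization (Gp : PreGroupoid G) (G₁ G₂ : Set G) (p₁ p₂ : G → G) : Prop :=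
  ∀ g, p₁ g ∈ G₁ ∧ p₂ g ∈ G₂ ∧ Gp.s (p₁ g) = Gp.r (p₂ g) ∧ Gp.mul (p₁ g) (p₂ g) = g

/-- Uniqueness of composable factorizations with first factor in `G₁`, second in `G₂`. -/
def UniqueFactorization (Gp : PreGroupoid G) (G₁ G₂ : Set G) : Prop :=
  ∀ g₁ g₂ h₁ h₂, g₁ ∈ G₁ → g₂ ∈ G₂ → h₁ ∈ G₁ → h₂ ∈ G₂ →
    Gp.s g₁ = Gp.r g₂ → Gp.s h₁ = Gp.r h₂ →
    Gp.mul g₁ g₂ = Gp.mul h₁ h₂ → g₁ = h₁ ∧ g₂ = h₂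

end PreGroupoid

/-! If `g = a b = c d` with `a, d ∈ G₁` and `b, c ∈ G₂`, then `φ g = a⁻¹ c = b d⁻¹`.
These are a `G₁G₂`- and a `G₂G₁`-factorization of `φ g`, and factorizations are unique
because `G₁ ∩ G₂ = G⁰`; hence `p₁ (φ g) = a⁻¹` and `p₂' (φ g) = b`, so `φ (φ g) = a b = g`. -/

namespace PreGroupoid

variable {G : Type*} (Gp : PreGroupoid G)

theorem inv_mul_cancel_left {x y : G} (h : Gp.s x = Gp.r y) :
    Gp.mul (Gp.inv x) (Gp.mul x y) = y := by
  rw [← Gp.mul_assoc' _ _ _ (Gp.s_inv x) h, Gp.inv_mul, h, Gp.id_left]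

theorem mul_inv_cancel_left {x y : G} (h : Gp.r x = Gp.r y) :
    Gp.mul x (Gp.mul (Gp.inv x) y) = y := by
  rw [← Gp.mul_assoc' _ _ _ (Gp.r_inv x).symm (by rw [Gp.s_inv, h]), Gp.mul_inv, h, Gp.id_left]

theorem mul_inv_cancel_right {x y : G} (h : Gp.s x = Gp.r y) :
    Gp.mul (Gp.mul x y) (Gp.inv y) = x := by
  rw [Gp.mul_assoc' _ _ _ h (Gp.r_inv y).symm, Gp.mul_inv, ← h, Gp.id_right]

theorem inv_inv (x : G) : Gp.inv (Gp.inv x) = x := by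
  have h := Gp.inv_mul_cancel_left (Gp.s_inv x)
  rwa [Gp.inv_mul, ← Gp.r_inv, ← Gp.s_inv, Gp.id_right] at h

theorem r_eq_self_of_mem_units {x : G} (hx : x ∈ Gp.units) : Gp.r x = x := by
  obtain ⟨y, rfl⟩ := hx
  exact Gp.r_s y

section MulEqMul

variable {a b c d : G} (hab : Gp.s a = Gp.r b) (hcd : Gp.s c = Gp.r d)
  (h : Gp.mul a b = Gp.mul c d)
include hab hcd h

theorem r_eq_r_of_mul_eq_mul : Gp.r a = Gp.r c := by
  rw [← Gp.r_mul _ _ hab, h, Gp.r_mul _ _ hcd]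

theorem s_eq_s_of_mul_eq_mul : Gp.s b = Gp.s d := by
  rw [← Gp.s_mul _ _ hab, h, Gp.s_mul _ _ hcd]

theorem inv_mul_eq_mul_inv_of_mul_eq_mul : Gp.mul (Gp.inv a) c = Gp.mul b (Gp.inv d) := by
  have hbd : Gp.s b = Gp.r (Gp.inv d) := by
    rw [Gp.r_inv]; exact Gp.s_eq_s_of_mul_eq_mul hab hcd h
  have hc : c = Gp.mul a (Gp.mul b (Gp.inv d)) := by
    rw [← Gp.mul_assoc' _ _ _ hab hbd, h, Gp.mul_inv_cancel_right hcd]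
  rw [hc, Gp.inv_mul_cancel_left (by rw [Gp.r_mul _ _ hbd, hab])]

end MulEqMul

theorem uniqueFactorization_of_inter_eq_units {G₁ G₂ : Set G}
    (h1 : Gp.IsSubgroupoid G₁) (h2 : Gp.IsSubgroupoid G₂) (hinter : G₁ ∩ G₂ = Gp.units) :
    Gp.UniqueFactorization G₁ G₂ := by
  intro g₁ g₂ h₁ h₂ hg₁ hg₂ hh₁ hh₂ hg hh heq
  have hr : Gp.r h₁ = Gp.r g₁ := Gp.r_eq_r_of_mul_eq_mul hh hg heq.symm
  have hcomp : Gp.s (Gp.inv h₁) = Gp.r g₁ := by rw [Gp.s_inv, hr]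
  -- `u = h₁⁻¹ g₁ = h₂ g₂⁻¹` lies in `G₁ ∩ G₂`, so it is a unit
  set u := Gp.mul (Gp.inv h₁) g₁ with hu_def
  have hu₁ : u ∈ G₁ := h1.mul_mem (h1.inv_mem hh₁) hg₁ hcomp
  have hu₂ : u ∈ G₂ := by
    rw [hu_def, Gp.inv_mul_eq_mul_inv_of_mul_eq_mul hh hg heq.symm]
    refine h2.mul_mem hh₂ (h2.inv_mem hg₂) ?_
    rw [Gp.r_inv]; exact Gp.s_eq_s_of_mul_eq_mul hh hg heq.symm
  have hu : u = Gp.s h₁ := by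
    rw [← Gp.r_eq_self_of_mem_units (hinter ▸ ⟨hu₁, hu₂⟩ : u ∈ Gp.units), hu_def,
      Gp.r_mul _ _ hcomp, Gp.r_inv]
  have h₁g₁ : g₁ = h₁ := by
    rw [← Gp.mul_inv_cancel_left hr, ← hu_def, hu, Gp.id_right]
  subst h₁g₁
  refine ⟨rfl, ?_⟩
  calc g₂ = Gp.mul (Gp.inv g₁) (Gp.mul g₁ g₂) := (Gp.inv_mul_cancel_left hg).symm
    _ = Gp.mul (Gp.inv g₁) (Gp.mul g₁ h₂) := by rw [heq]
    _ = h₂ := Gp.inv_mul_cancel_left hh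

variable {Gp} in
theorem UniqueFactorization.factor_mul {G₁ G₂ : Set G} {p₁ p₂ : G → G}
    (hu : Gp.UniqueFactorization G₁ G₂) (hp : Gp.IsFactorization G₁ G₂ p₁ p₂)
    {x y : G} (hx : x ∈ G₁) (hy : y ∈ G₂) (hxy : Gp.s x = Gp.r y) :
    p₁ (Gp.mul x y) = x ∧ p₂ (Gp.mul x y) = y :=
  let ⟨h₁, h₂, hs, hmul⟩ := hp (Gp.mul x y)
  hu _ _ _ _ h₁ h₂ hx hy hs hxy hmul

end PreGroupoid

/-- `φ` is an involution: `φ(φ(g)) = g`. -/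
theorem stmt5 {G : Type*} (Gp : PreGroupoid G) (G₁ G₂ : Set G)
    (h1 : Gp.IsSubgroupoid G₁) (h2 : Gp.IsSubgroupoid G₂)
    (hinter : G₁ ∩ G₂ = Gp.units)
    (p₁ p₂ p₁' p₂' : G → G)
    (hfact : Gp.IsFactorization G₁ G₂ p₁ p₂)
    (hfact' : Gp.IsFactorization G₂ G₁ p₂' p₁')
    (φ : G → G)
    (hφ : ∀ g, φ g = Gp.mul (Gp.inv (p₁ g)) (p₂' g)) :
    ∀ g, φ (φ g) = g := by
  intro g
  obtain ⟨ha, hb, hab, habg⟩ := hfact g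
  obtain ⟨hc, hd, hcd, hcdg⟩ := hfact' g
  have heq : Gp.mul (p₁ g) (p₂ g) = Gp.mul (p₂' g) (p₁' g) := habg.trans hcdg.symm
  have huniq := Gp.uniqueFactorization_of_inter_eq_units h1 h2 hinter
  have huniq' := Gp.uniqueFactorization_of_inter_eq_units h2 h1 (by rwa [Set.inter_comm])
  have hp₁ : p₁ (φ g) = Gp.inv (p₁ g) := by
    rw [hφ g]
    refine (huniq.factor_mul hfact (h1.inv_mem ha) hc ?_).1
    rw [Gp.s_inv]; exact Gp.r_eq_r_of_mul_eq_mul hab hcd heq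
  have hp₂' : p₂' (φ g) = p₂ g := by
    rw [hφ g, Gp.inv_mul_eq_mul_inv_of_mul_eq_mul hab hcd heq]
    refine (huniq'.factor_mul hfact' hb (h1.inv_mem hd) ?_).1
    rw [Gp.r_inv]; exact Gp.s_eq_s_of_mul_eq_mul hab hcd heq
  rw [hφ (φ g), hp₁, hp₂', Gp.inv_inv, habg]
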